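/- arXiv:2212.10421 — 4 statements merged into one kernel-verified Lean document; each statement's English description precedes it below -/
import Mathlib

section
/- Let n, t ≥ 1, let d = 2^n, and let S ⊆ Fin n be a set of qubit sites. Let μ_Haar denote the pushforward of the Haar probability measure on the unitary group U(d) under U ↦ U e₀ (e₀ the first standard basis vector), a probability measure on unit vectors ψ ∈ ℂ^d, and let Υ be any probability measure on the unit vectors of ℂ^d. For a unit vector ψ, let ρ_A(ψ) denote the partial trace over the sites outside S of the rank-one projector ψψ*, i.e. the matrix indexed by (S → Fin 2) with entries ρ_A(ψ)(a,a') = Σ_{b : Sᶜ → Fin 2} ψ(a,b) · conj(ψ(a',b)) under the canonical index equivalence (Fin n → Fin 2) ≃ (S → Fin 2) × (Sᶜ → Fin 2). Suppose Υ is an ε-approximate t-design in the sense that the operator norm of ∫ (ψψ*)^{⊗t} dΥ(ψ) − ∫ (ψψ*)^{⊗t} dμ_Haar(ψ) is at most ε. Then ∫ Tr(ρ_A(ψ)^t) dΥ(ψ) ≤ ∫ Tr(ρ_A(ψ)^t) dμ_Haar(ψ) + 2^{nt} ε. -/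
open MeasureTheory Matrix

noncomputable instance matrixMeasurableSpace {ι : Type*} : MeasurableSpace (Matrix ι ι ℂ) :=
  (inferInstance : MeasurableSpace (ι → ι → ℂ))

/-- The reduced density matrix `ρ_A(ψ)` of the rank-one projector `ψψ*` on the sites in
`S`, obtained by tracing out the sites outside `S`:
`ρ_A(ψ)(a, a') = Σ_b ψ(a, b) · conj (ψ(a', b))` under the canonical index equivalence
`(Fin n → Fin 2) ≃ (S → Fin 2) × (Sᶜ → Fin 2)`. -/
noncomputable def reducedDensity {n : ℕ} (S : Finset (Fin n)) (ψ : (Fin n → Fin 2) → ℂ) :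
    Matrix ({i : Fin n // i ∈ S} → Fin 2) ({i : Fin n // i ∈ S} → Fin 2) ℂ :=
  Matrix.of fun a a' =>
    ∑ b : {i : Fin n // ¬ i ∈ S} → Fin 2,
      ψ ((Equiv.piEquivPiSubtypeProd (· ∈ S) fun _ => Fin 2).symm (a, b)) *
        (starRingEnd ℂ) (ψ ((Equiv.piEquivPiSubtypeProd (· ∈ S) fun _ => Fin 2).symm (a', b)))

/-- The `t`-th moment matrix `∫ (ψψ*)^{⊗t} dν(ψ)` of a measure `ν` on state vectors,
written entrywise: the `t`-fold Kronecker power `(ψψ*)^{⊗t}` has `(x, y)` entry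
`∏_k ψ(x k) · conj (ψ(y k))`. -/
noncomputable def momentMatrix (n t : ℕ) (ν : Measure ((Fin n → Fin 2) → ℂ)) :
    Matrix (Fin t → Fin n → Fin 2) (Fin t → Fin n → Fin 2) ℂ :=
  Matrix.of fun x y => ∫ ψ, ∏ k, ψ (x k) * (starRingEnd ℂ) (ψ (y k)) ∂ν

/-!
Writing `Tr ρ_A(ψ)^t` as a sum over closed walks and expanding each entry of `ρ_A(ψ)`,
one gets `Tr ρ_A(ψ)^t = Σ_x ((ψψ*)^{⊗t})(x, σ x)`, where `x` runs over the `2^{nt}` basis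
labels of the `t`-fold tensor power and `σ` shifts the `S`-part of `x` cyclically by one copy
(`Tr(ρ_A^t) = Tr((ψψ*)^{⊗t} P)` for a permutation matrix `P`). Integrating, the two sides of
the claim are sums of `2^{nt}` entries of the moment matrices of `Υ` and of `μ_Haar`, and every
entry of a matrix is bounded by its operator norm.
-/

namespace Matrix

variable {ι R : Type*} [Fintype ι] [DecidableEq ι] [CommSemiring R]

theorem pow_succ_apply_eq_sum_prod (M : Matrix ι ι R) (s : ℕ) (i j : ι) :
    (M ^ (s + 1)) i j = ∑ a : Fin s → ι,
      ∏ k, M (Fin.cons (α := fun _ => ι) i a k) (Fin.snoc (α := fun _ => ι) a j k) := by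
  induction s generalizing i with
  | zero => simp [Fin.snoc]
  | succ s ih =>
    rw [pow_succ', mul_apply, ← (Fin.consEquiv fun _ => ι).sum_comp, Fintype.sum_prod_type]
    simp_rw [ih, Finset.mul_sum]
    refine Finset.sum_congr rfl fun l _ => Finset.sum_congr rfl fun a _ => ?_
    change _ = ∏ k, M (Fin.cons (α := fun _ => ι) i (Fin.cons l a) k)
      (Fin.snoc (α := fun _ => ι) (Fin.cons l a) j k)
    rw [← Fin.cons_snoc_eq_snoc_cons, Fin.prod_univ_succ (n := s + 1)]
    simp

theorem trace_pow_eq_sum_prod_finRotate (M : Matrix ι ι R) {t : ℕ} (ht : 0 < t) :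
    (M ^ t).trace = ∑ a : Fin t → ι, ∏ k, M (a k) (a (finRotate t k)) := by
  obtain ⟨s, rfl⟩ := Nat.exists_eq_add_of_lt ht
  rw [zero_add, trace, ← (Fin.consEquiv fun _ => ι).sum_comp, Fintype.sum_prod_type]
  simp [pow_succ_apply_eq_sum_prod, Fin.snoc_eq_cons_rotate]

theorem norm_apply_le_norm_toEuclideanCLM {𝕜 : Type*} [RCLike 𝕜] (A : Matrix ι ι 𝕜) (i j : ι) :
    ‖A i j‖ ≤ ‖toEuclideanCLM (𝕜 := 𝕜) A‖ := by
  have h := (toEuclideanCLM (𝕜 := 𝕜) A).le_opNorm (PiLp.single 2 j 1)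
  rw [PiLp.norm_single, norm_one, mul_one] at h
  refine le_trans (le_of_eq ?_) ((PiLp.norm_apply_le _ i).trans h)
  simp [← PiLp.toLp_single, toEuclideanCLM_toLp]

theorem sum_re_apply_le_of_norm_toEuclideanCLM_sub_le {A B : Matrix ι ι ℂ} {ε : ℝ}
    (h : ‖toEuclideanCLM (𝕜 := ℂ) (A - B)‖ ≤ ε) (f : ι → ι) :
    ∑ i, (A i (f i)).re ≤ ∑ i, (B i (f i)).re + Fintype.card ι * ε := by
  have entry (i : ι) : (A i (f i)).re ≤ (B i (f i)).re + ε := by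
    have := (Complex.re_le_norm _).trans ((norm_apply_le_norm_toEuclideanCLM _ i (f i)).trans h)
    rw [sub_apply, Complex.sub_re] at this
    linarith
  calc ∑ i, (A i (f i)).re ≤ ∑ i, ((B i (f i)).re + ε) := Finset.sum_le_sum fun i _ => entry i
    _ = _ := by simp [Finset.sum_add_distrib]

end Matrix

theorem norm_le_one_of_sum_normSq_eq_one {V : Type*} [Fintype V] {ψ : V → ℂ}
    (hψ : ∑ z, Complex.normSq (ψ z) = 1) (z : V) : ‖ψ z‖ ≤ 1 := by
  have : ‖ψ z‖ ^ 2 ≤ 1 := by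
    rw [Complex.sq_norm, ← hψ]
    exact Finset.single_le_sum (fun w _ => Complex.normSq_nonneg (ψ w)) (Finset.mem_univ z)
  exact (sq_le_one_iff₀ (norm_nonneg _)).mp this

theorem measurable_unitaryGroup_mulVec {V : Type*} [Fintype V] [DecidableEq V] (v : V → ℂ) :
    Measurable fun U : unitaryGroup V ℂ => (U : Matrix V V ℂ) *ᵥ v := by
  have hentry (x y : V) : Measurable fun U : unitaryGroup V ℂ => (U : Matrix V V ℂ) x y :=
    (measurable_pi_apply y).comp ((measurable_pi_apply x).comp measurable_subtype_coe)
  exact measurable_pi_lambda _ fun x => Finset.measurable_sum _ fun y _ => (hentry x y).mul_const _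

theorem ae_norm_le_one_map_mulVec_single {V : Type*} [Fintype V] [DecidableEq V]
    (μU : Measure (unitaryGroup V ℂ)) (i : V) :
    ∀ᵐ ψ ∂μU.map (fun U : unitaryGroup V ℂ => (U : Matrix V V ℂ) *ᵥ Pi.single i 1),
      ∀ z, ‖ψ z‖ ≤ 1 := by
  rw [ae_map_iff (measurable_unitaryGroup_mulVec _).aemeasurable (by measurability)]
  exact ae_of_all _ fun U z => by simpa using entry_norm_bound_of_unitary U.2 z i

theorem integrable_prod_mul_conj {V : Type*} {t : ℕ} {ν : Measure (V → ℂ)} [IsFiniteMeasure ν]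
    (hν : ∀ᵐ ψ ∂ν, ∀ z, ‖ψ z‖ ≤ 1) (x y : Fin t → V) :
    Integrable (fun ψ => ∏ k, ψ (x k) * starRingEnd ℂ (ψ (y k))) ν := by
  refine Integrable.mono' (integrable_const 1)
    (Finset.measurable_prod _ fun k _ => by fun_prop).aestronglyMeasurable ?_
  filter_upwards [hν] with ψ hψ
  rw [norm_prod]
  refine Finset.prod_le_one (fun _ _ => norm_nonneg _) fun k _ => ?_
  rw [norm_mul, Complex.norm_conj]
  exact mul_le_one₀ (hψ _) (norm_nonneg _) (hψ _)

def cyclicShiftOn {n t : ℕ} (S : Finset (Fin n)) (x : Fin t → Fin n → Fin 2) :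
    Fin t → Fin n → Fin 2 :=
  fun k i => if i ∈ S then x (finRotate t k) i else x k i

theorem trace_reducedDensity_pow {n t : ℕ} (S : Finset (Fin n)) (ψ : (Fin n → Fin 2) → ℂ)
    (ht : 0 < t) :
    (reducedDensity S ψ ^ t).trace =
      ∑ x : Fin t → Fin n → Fin 2, ∏ k, ψ (x k) * starRingEnd ℂ (ψ (cyclicShiftOn S x k)) := by
  let e := Equiv.piEquivPiSubtypeProd (· ∈ S) fun _ : Fin n => Fin 2
  let E : (Fin t → {i // i ∈ S} → Fin 2) × (Fin t → {i // i ∉ S} → Fin 2) ≃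
      (Fin t → Fin n → Fin 2) :=
    (Equiv.arrowProdEquivProdArrow _ _ _).symm.trans (Equiv.piCongrRight fun _ => e.symm)
  simp only [trace_pow_eq_sum_prod_finRotate _ ht, reducedDensity, of_apply,
    Finset.prod_univ_sum, Fintype.piFinset_univ]
  rw [← Fintype.sum_prod_type', ← E.sum_comp]
  refine Fintype.sum_congr _ _ fun ab => Finset.prod_congr rfl fun k _ => ?_
  congr 3
  ext i
  by_cases hi : i ∈ S <;> simp [E, e, cyclicShiftOn, hi]

theorem integral_re_trace_reducedDensity_pow {n t : ℕ} (S : Finset (Fin n))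
    {ν : Measure ((Fin n → Fin 2) → ℂ)} [IsFiniteMeasure ν] (hν : ∀ᵐ ψ ∂ν, ∀ z, ‖ψ z‖ ≤ 1)
    (ht : 0 < t) :
    ∫ ψ, ((reducedDensity S ψ) ^ t).trace.re ∂ν =
      ∑ x, (momentMatrix n t ν x (cyclicShiftOn S x)).re := by
  simp_rw [trace_reducedDensity_pow S _ ht, Complex.re_sum]
  rw [integral_finsetSum _ fun x _ => ?integrable]
  · exact Finset.sum_congr rfl fun x _ => integral_re (integrable_prod_mul_conj hν _ _)
  · exact (integrable_prod_mul_conj hν _ _).re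

theorem approximate_design_partial_trace_bound_general
    (n t : ℕ) (ht : 1 ≤ t) (S : Finset (Fin n)) (ε : ℝ)
    (μU : Measure (Matrix.unitaryGroup (Fin n → Fin 2) ℂ))
    [IsProbabilityMeasure μU]
    (Υ : Measure ((Fin n → Fin 2) → ℂ)) [IsProbabilityMeasure Υ]
    (hΥunit : ∀ᵐ ψ ∂Υ, ∑ x : Fin n → Fin 2, Complex.normSq (ψ x) = 1)
    (μHaar : Measure ((Fin n → Fin 2) → ℂ))
    (hμHaar : μHaar = Measure.map
      (fun U : Matrix.unitaryGroup (Fin n → Fin 2) ℂ =>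
        (U : Matrix (Fin n → Fin 2) (Fin n → Fin 2) ℂ).mulVec
          (Pi.single (fun _ => (0 : Fin 2)) (1 : ℂ))) μU)
    (hdesign : ‖Matrix.toEuclideanCLM (𝕜 := ℂ)
        (momentMatrix n t Υ - momentMatrix n t μHaar)‖ ≤ ε) :
    ∫ ψ, ((reducedDensity S ψ) ^ t).trace.re ∂Υ ≤
      (∫ ψ, ((reducedDensity S ψ) ^ t).trace.re ∂μHaar) + 2 ^ (n * t) * ε := by
  have hΥ : ∀ᵐ ψ ∂Υ, ∀ z, ‖ψ z‖ ≤ 1 :=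
    hΥunit.mono fun _ hψ => norm_le_one_of_sum_normSq_eq_one hψ
  have hHaar : ∀ᵐ ψ ∂μHaar, ∀ z, ‖ψ z‖ ≤ 1 :=
    hμHaar ▸ ae_norm_le_one_map_mulVec_single μU _
  have : IsFiniteMeasure μHaar := hμHaar ▸ inferInstance
  rw [integral_re_trace_reducedDensity_pow S hΥ ht,
    integral_re_trace_reducedDensity_pow S hHaar ht]
  calc _ ≤ _ := sum_re_apply_le_of_norm_toEuclideanCLM_sub_le hdesign _
    _ = _ := by simp [pow_mul]

/-- Theorem 15 of Liu et al., as quoted in the paper: if `Υ` is an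
`ε`-approximate `t`-design (its `t`-th moment matrix is within `ε`, in operator norm, of
that of the Haar state ensemble `μ_Haar`, the pushforward of the Haar probability measure
on `U(2^n)` under `U ↦ U e₀`), then
`∫ Tr(ρ_A(ψ)^t) dΥ ≤ ∫ Tr(ρ_A(ψ)^t) dμ_Haar + 2^{nt} ε`. -/
theorem approximate_design_partial_trace_bound
    (n t : ℕ) (hn : 1 ≤ n) (ht : 1 ≤ t) (S : Finset (Fin n)) (ε : ℝ)
    (μU : Measure (Matrix.unitaryGroup (Fin n → Fin 2) ℂ))
    [μU.IsHaarMeasure] [IsProbabilityMeasure μU]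
    (Υ : Measure ((Fin n → Fin 2) → ℂ)) [IsProbabilityMeasure Υ]
    (hΥunit : ∀ᵐ ψ ∂Υ, ∑ x : Fin n → Fin 2, Complex.normSq (ψ x) = 1)
    (μHaar : Measure ((Fin n → Fin 2) → ℂ))
    (hμHaar : μHaar = Measure.map
      (fun U : Matrix.unitaryGroup (Fin n → Fin 2) ℂ =>
        (U : Matrix (Fin n → Fin 2) (Fin n → Fin 2) ℂ).mulVec
          (Pi.single (fun _ => (0 : Fin 2)) (1 : ℂ))) μU)
    (hdesign : ‖Matrix.toEuclideanCLM (𝕜 := ℂ)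
        (momentMatrix n t Υ - momentMatrix n t μHaar)‖ ≤ ε) :
    ∫ ψ, ((reducedDensity S ψ) ^ t).trace.re ∂Υ ≤
      (∫ ψ, ((reducedDensity S ψ) ^ t).trace.re ∂μHaar) + 2 ^ (n * t) * ε :=
  approximate_design_partial_trace_bound_general n t ht S ε μU Υ hΥunit μHaar hμHaar hdesign
end

section
/- Let n ≥ 1, let S ⊆ Fin n, and let A be a complex matrix indexed by (Fin n → Fin 2) that is supported on S. Then every Pauli string P : Fin n → Fin 4 with Tr(σ^P A) ≠ 0 satisfies {i : P i ≠ 0} ⊆ S; consequently the number of Pauli strings P with Tr(σ^P A) ≠ 0 is at most 4^{|S|}. -/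
open Matrix

/-- The four single-qubit Pauli matrices: `σ₀ = I`, `σ₁ = X`, `σ₂ = Y`, `σ₃ = Z`. -/
noncomputable def pauli : Fin 4 → Matrix (Fin 2) (Fin 2) ℂ :=
  ![1, !![0, 1; 1, 0], !![0, -Complex.I; Complex.I, 0], !![1, 0; 0, -1]]

/-- The `2^n × 2^n` matrix associated to a Pauli string `P : Fin n → Fin 4`:
the `n`-fold Kronecker product of the single-site Pauli matrices `σ_{P i}`. -/
noncomputable def pauliString (n : ℕ) (P : Fin n → Fin 4) :
    Matrix (Fin n → Fin 2) (Fin n → Fin 2) ℂ :=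
  Matrix.of fun x y => ∏ i, pauli (P i) (x i) (y i)

/-- A matrix `A` indexed by `Fin n → Fin 2` is *supported on* `S ⊆ Fin n` if, under the
canonical index equivalence `(Fin n → Fin 2) ≃ (S → Fin 2) × (Sᶜ → Fin 2)`, it is the
Kronecker product `B ⊗ 1` of some matrix `B` indexed by `S → Fin 2` with the identity
on the remaining sites. -/
def supportedOn {n : ℕ} (S : Finset (Fin n))
    (A : Matrix (Fin n → Fin 2) (Fin n → Fin 2) ℂ) : Prop :=
  ∃ B : Matrix ({i : Fin n // i ∈ S} → Fin 2) ({i : Fin n // i ∈ S} → Fin 2) ℂ,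
    A = Matrix.of fun x y =>
      Matrix.kroneckerMap (· * ·) B
        (1 : Matrix ({i : Fin n // ¬ i ∈ S} → Fin 2) ({i : Fin n // ¬ i ∈ S} → Fin 2) ℂ)
        ((Equiv.piEquivPiSubtypeProd (· ∈ S) fun _ => Fin 2) x)
        ((Equiv.piEquivPiSubtypeProd (· ∈ S) fun _ => Fin 2) y)

lemma pauli_trace_zero (k : Fin 4) (hk : k ≠ 0) : (pauli k).trace = 0 := by
  fin_cases k
  · exact absurd rfl hk
  all_goals simp [pauli, Matrix.trace_fin_two]

lemma key_trace (n : ℕ) (S : Finset (Fin n))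
    (B : Matrix ({i : Fin n // i ∈ S} → Fin 2) ({i : Fin n // i ∈ S} → Fin 2) ℂ)
    (A : Matrix (Fin n → Fin 2) (Fin n → Fin 2) ℂ)
    (hAB : A = Matrix.of fun x y =>
      Matrix.kroneckerMap (· * ·) B
        (1 : Matrix ({i : Fin n // ¬ i ∈ S} → Fin 2) ({i : Fin n // ¬ i ∈ S} → Fin 2) ℂ)
        ((Equiv.piEquivPiSubtypeProd (· ∈ S) fun _ => Fin 2) x)
        ((Equiv.piEquivPiSubtypeProd (· ∈ S) fun _ => Fin 2) y))
    (P : Fin n → Fin 4) :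
    (pauliString n P * A).trace =
      (∑ u : {i : Fin n // i ∈ S} → Fin 2, ∑ u' : {i : Fin n // i ∈ S} → Fin 2,
        (∏ i : {i : Fin n // i ∈ S}, pauli (P i) (u i) (u' i)) * B u' u) *
      ∏ i : {i : Fin n // ¬ i ∈ S}, (pauli (P i)).trace := by
  classical
  set e := Equiv.piEquivPiSubtypeProd (· ∈ S) fun _ : Fin n => Fin 2 with he
  have htr : (pauliString n P * A).trace
      = ∑ x, ∑ y, (∏ i, pauli (P i) (x i) (y i)) * A y x := by
    simp [Matrix.trace, Matrix.mul_apply, Matrix.diag, pauliString]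
  rw [htr, hAB]
  have hre : ∀ F : (Fin n → Fin 2) → ℂ, ∑ y, F y = ∑ p, F (e.symm p) :=
    fun F => (Equiv.sum_comp e.symm F).symm
  rw [hre]
  simp only [hre fun y => _]
  rw [Fintype.sum_prod_type]
  simp only [Fintype.sum_prod_type]
  have hsplit : ∀ (x y : Fin n → Fin 2),
      (∏ i, pauli (P i) (x i) (y i)) =
      (∏ i : {i : Fin n // i ∈ S}, pauli (P i) (x i) (y i)) *
      ∏ i : {i : Fin n // ¬ i ∈ S}, pauli (P i) (x i) (y i) := by
    intro x y
    rw [← Finset.prod_mul_prod_compl S (fun i => pauli (P i) (x i) (y i)),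
      Finset.prod_subtype S (fun _ => Iff.rfl) (fun i => pauli (P i) (x i) (y i)),
      Finset.prod_subtype Sᶜ (fun i => Finset.mem_compl) (fun i => pauli (P i) (x i) (y i))]
  have hSa : ∀ (u : {i : Fin n // i ∈ S} → Fin 2) (v : {i : Fin n // ¬ i ∈ S} → Fin 2)
      (i : {i : Fin n // i ∈ S}), e.symm (u, v) ↑i = u i := by
    intro u v i
    simp only [he, Equiv.piEquivPiSubtypeProd_symm_apply, dif_pos i.2, Subtype.coe_eta]
  have hCa : ∀ (u : {i : Fin n // i ∈ S} → Fin 2) (v : {i : Fin n // ¬ i ∈ S} → Fin 2)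
      (i : {i : Fin n // ¬ i ∈ S}), e.symm (u, v) ↑i = v i := by
    intro u v i
    simp only [he, Equiv.piEquivPiSubtypeProd_symm_apply, dif_neg i.2, Subtype.coe_eta]
  simp only [hsplit, Matrix.of_apply, Equiv.apply_symm_apply, Matrix.kroneckerMap_apply,
    Matrix.one_apply, hSa, hCa]
  simp only [mul_ite, mul_one, mul_zero, Finset.sum_ite_eq', Finset.mem_univ, if_true]
  have hprod : (∏ i : {i : Fin n // ¬ i ∈ S}, (pauli (P ↑i)).trace)
      = ∑ v : {i : Fin n // ¬ i ∈ S} → Fin 2,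
          ∏ i : {i : Fin n // ¬ i ∈ S}, pauli (P ↑i) (v i) (v i) := by
    simp only [Matrix.trace, Matrix.diag]
    rw [Finset.prod_univ_sum]
    rw [Fintype.piFinset_univ]
  rw [hprod, Finset.sum_mul]
  refine Finset.sum_congr rfl fun u _ => ?_
  rw [Finset.sum_mul, Finset.sum_comm]
  refine Finset.sum_congr rfl fun u' _ => ?_
  rw [Finset.mul_sum]
  exact Finset.sum_congr rfl fun v _ => by ring

/-- If `A` is supported on `S`, then every Pauli string `P` with
`Tr(σ^P A) ≠ 0` has all its non-identity sites in `S`; consequently there are at most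
`4^{|S|}` Pauli strings with `Tr(σ^P A) ≠ 0`. -/
theorem pauli_terms_of_supported_operator (n : ℕ) (hn : 1 ≤ n) (S : Finset (Fin n))
    (A : Matrix (Fin n → Fin 2) (Fin n → Fin 2) ℂ) (hA : supportedOn S A) :
    (∀ P : Fin n → Fin 4, (pauliString n P * A).trace ≠ 0 → ∀ i : Fin n, P i ≠ 0 → i ∈ S) ∧
    Nat.card {P : Fin n → Fin 4 // (pauliString n P * A).trace ≠ 0} ≤ 4 ^ S.card := by
  classical
  obtain ⟨B, hAB⟩ := hA
  have h1 : ∀ P : Fin n → Fin 4, (pauliString n P * A).trace ≠ 0 →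
      ∀ i : Fin n, P i ≠ 0 → i ∈ S := by
    intro P hP i hPi
    by_contra hi
    apply hP
    rw [key_trace n S B A hAB P]
    rw [Finset.prod_eq_zero (Finset.mem_univ (⟨i, hi⟩ : {i : Fin n // ¬ i ∈ S}))
      (pauli_trace_zero _ hPi), mul_zero]
  refine ⟨h1, ?_⟩
  have hinj : Function.Injective
      (fun P : {P : Fin n → Fin 4 // (pauliString n P * A).trace ≠ 0} =>
        (fun i : {i : Fin n // i ∈ S} => P.1 i)) := by
    rintro ⟨P, hP⟩ ⟨Q, hQ⟩ h
    refine Subtype.ext (funext fun i => ?_)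
    by_cases hi : i ∈ S
    · exact congrFun h ⟨i, hi⟩
    · have hP0 : P i = 0 := by
        by_contra h'; exact hi (h1 P hP i h')
      have hQ0 : Q i = 0 := by
        by_contra h'; exact hi (h1 Q hQ i h')
      show P i = Q i
      rw [hP0, hQ0]
  calc Nat.card {P : Fin n → Fin 4 // (pauliString n P * A).trace ≠ 0}
      ≤ Nat.card ({i : Fin n // i ∈ S} → Fin 4) := Nat.card_le_card_of_injective _ hinj
    _ = 4 ^ S.card := by
        simp [Nat.card_eq_fintype_card, Fintype.card_fun, Fintype.card_coe]
end

section
/- Let n ≥ 1 and l ≥ 0, let U = U_l · U_{l-1} ⋯ U_1 where each U_j is a brick-wall layer on n qubits, and let A be a matrix indexed by (Fin n → Fin 2) supported on the interval {i : Fin n | a ≤ (i : ℤ) ∧ (i : ℤ) ≤ b} for integers a ≤ b. Then U* A U is supported on the interval {i : Fin n | a − l ≤ (i : ℤ) ∧ (i : ℤ) ≤ b + l}. In particular, the conjugation of an operator supported on an interval of length m by l brick-wall layers is supported on an interval of length at most m + 2l. -/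
open Matrix

/-- A *brick-wall layer* on `n` qubits: a product of finitely many unitary matrices, each
supported on a pair `{i, i+1}` of adjacent sites, with the pairs pairwise disjoint. -/
def IsBrickWallLayer {n : ℕ} (U : Matrix (Fin n → Fin 2) (Fin n → Fin 2) ℂ) : Prop :=
  ∃ gates : List (Matrix (Fin n → Fin 2) (Fin n → Fin 2) ℂ × Finset (Fin n)),
    U = (gates.map Prod.fst).prod ∧
    (∀ p ∈ gates, p.1 ∈ Matrix.unitaryGroup (Fin n → Fin 2) ℂ) ∧
    (∀ p ∈ gates, ∃ (m : ℕ) (h : m + 1 < n),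
      p.2 = ({⟨m, Nat.lt_of_succ_lt h⟩, ⟨m + 1, h⟩} : Finset (Fin n)) ∧
      supportedOn p.2 p.1) ∧
    (gates.map Prod.snd).Pairwise Disjoint

/-! Conjugating an operator supported on `C` by a unitary gate keeps it supported on `C` when
the gate is supported inside `C` (products and adjoints of `C`-supported operators are
`C`-supported), and leaves it unchanged when the gate is supported on a set disjoint from `C`
(operators on disjoint sites commute). The gates of one brick-wall layer have pairwise disjoint
supports, so `S` together with every gate meeting `S` is a region that each gate either lies in
or avoids; as gates act on adjacent pairs, this region extends `S` by at most one site on each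
side. Each of the `l` layers thus widens the interval by one site on either end. -/

section

variable {n : ℕ} {S T : Finset (Fin n)} {A C U : Matrix (Fin n → Fin 2) (Fin n → Fin 2) ℂ}

theorem supportedOn_iff_apply : supportedOn S A ↔ ∃ B : Matrix (S → Fin 2) (S → Fin 2) ℂ,
    ∀ x y, A x y = if ∀ i ∉ S, x i = y i then B (fun i => x i) (fun i => y i) else 0 := by
  refine exists_congr fun B => Matrix.ext_iff.symm.trans (forall₂_congr fun x y => ?_)
  simp [Matrix.one_apply, funext_iff]

namespace supportedOn

theorem mul (hA : supportedOn S A) (hC : supportedOn S C) : supportedOn S (A * C) := by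
  obtain ⟨B, rfl⟩ := hA
  obtain ⟨D, rfl⟩ := hC
  exact ⟨B * D, (Matrix.submatrix_mul_equiv _ _ _ _ _).trans
    (by rw [← Matrix.mul_kronecker_mul, Matrix.mul_one]; rfl)⟩

theorem conjTranspose (hA : supportedOn S A) : supportedOn S Aᴴ := by
  obtain ⟨B, hB⟩ := supportedOn_iff_apply.mp hA
  refine supportedOn_iff_apply.mpr ⟨Bᴴ, fun x y => ?_⟩
  simp only [Matrix.conjTranspose_apply, hB, eq_comm (a := y _)]
  split_ifs <;> simp

theorem mono (hST : S ⊆ T) (hA : supportedOn S A) : supportedOn T A := by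
  obtain ⟨B, hB⟩ := supportedOn_iff_apply.mp hA
  refine supportedOn_iff_apply.mpr ⟨Matrix.of fun u v =>
    if ∀ i : T, i.1 ∉ S → u i = v i then
      B (fun i => u ⟨i, hST i.2⟩) (fun i => v ⟨i, hST i.2⟩)
    else 0, fun x y => ?_⟩
  rw [hB, Matrix.of_apply, ← ite_and]
  refine if_congr
    ⟨fun h => ⟨fun i hi => h i fun h => hi (hST h), fun i hi => h i hi⟩, ?_⟩ rfl rfl
  rintro ⟨hT, hS⟩ i hi
  by_cases h : i ∈ T
  · exact hS ⟨i, h⟩ hi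
  · exact hT i h

theorem apply_eq_zero (hA : supportedOn S A) {x y : Fin n → Fin 2} {i : Fin n} (hi : i ∉ S)
    (hxy : x i ≠ y i) : A x y = 0 := by
  obtain ⟨B, hB⟩ := supportedOn_iff_apply.mp hA
  rw [hB, if_neg fun h => hxy (h i hi)]

theorem mul_apply_of_disjoint (hA : supportedOn S A) (hC : supportedOn T C) (hST : Disjoint S T)
    (x y : Fin n → Fin 2) : (A * C) x y = A x (S.piecewise y x) * C (S.piecewise y x) y := by
  rw [Matrix.mul_apply]
  refine Finset.sum_eq_single _ (fun z _ hz => ?_) (by simp)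
  obtain ⟨i, hi⟩ := Function.ne_iff.mp hz
  by_cases hiS : i ∈ S
  · rw [hC.apply_eq_zero (Finset.disjoint_left.mp hST hiS) (by simpa [hiS] using hi), mul_zero]
  · rw [hA.apply_eq_zero hiS (by simpa [hiS, eq_comm] using hi), zero_mul]

theorem commute_of_disjoint (hA : supportedOn S A) (hC : supportedOn T C) (hST : Disjoint S T) :
    Commute A C := by
  ext x y
  rw [hA.mul_apply_of_disjoint hC hST, hC.mul_apply_of_disjoint hA hST.symm]
  obtain ⟨B, hB⟩ := supportedOn_iff_apply.mp hA
  obtain ⟨D, hD⟩ := supportedOn_iff_apply.mp hC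
  have hS : ∀ i ∈ S, i ∉ T := fun _ h => Finset.disjoint_left.mp hST h
  have hT : ∀ i ∈ T, i ∉ S := fun _ h => Finset.disjoint_right.mp hST h
  simp only [hB, hD]
  simp +contextual [Finset.piecewise, hS, hT, mul_comm, imp.swap]

theorem star_mul_mul (hU : supportedOn S U) (hA : supportedOn S A) :
    supportedOn S (star U * A * U) :=
  (hU.conjTranspose.mul hA).mul hU

end supportedOn

theorem star_mul_mul_eq_self_of_disjoint (hU : U ∈ Matrix.unitaryGroup (Fin n → Fin 2) ℂ)
    (hUT : supportedOn T U) (hA : supportedOn S A) (hST : Disjoint S T) :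
    star U * A * U = A := by
  rw [mul_assoc, (hA.commute_of_disjoint hUT hST).eq, ← mul_assoc,
    Matrix.mem_unitaryGroup_iff'.mp hU, one_mul]

theorem supportedOn_star_prod_mul_mul_prod
    {Us : List (Matrix (Fin n → Fin 2) (Fin n → Fin 2) ℂ)}
    (hUs : ∀ U ∈ Us, ∀ A, supportedOn S A → supportedOn S (star U * A * U))
    (hA : supportedOn S A) : supportedOn S (star Us.prod * A * Us.prod) := by
  induction Us generalizing A with
  | nil => simpa using hA
  | cons U Us ih =>
    have hUA := hUs U List.mem_cons_self A hA
    simpa only [List.prod_cons, star_mul, mul_assoc] using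
      ih (fun V hV => hUs V (List.mem_cons_of_mem U hV)) hUA

end

section blockHull

variable {α : Type*} [DecidableEq α]

def blockHull (S : Finset α) (Ps : List (Finset α)) : Finset α :=
  S ∪ (Ps.toFinset.filter fun P => ¬ Disjoint P S).biUnion id

theorem mem_blockHull {S : Finset α} {Ps : List (Finset α)} {i : α} :
    i ∈ blockHull S Ps ↔ i ∈ S ∨ ∃ P ∈ Ps, ¬ Disjoint P S ∧ i ∈ P := by
  simp [blockHull, and_assoc]

theorem subset_blockHull_or_disjoint {S P : Finset α} {Ps : List (Finset α)}
    (hPs : Ps.Pairwise Disjoint) (hP : P ∈ Ps) :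
    P ⊆ blockHull S Ps ∨ Disjoint P (blockHull S Ps) := by
  by_cases hPS : Disjoint P S
  · refine .inr (Finset.disjoint_union_right.mpr
      ⟨hPS, (Finset.disjoint_biUnion_right _ _ _).mpr fun Q hQ => ?_⟩)
    simp only [Finset.mem_filter, List.mem_toFinset] at hQ
    exact hPs.forall hP hQ.1 (by rintro rfl; exact hQ.2 hPS)
  · exact .inl fun i hi => mem_blockHull.mpr (.inr ⟨P, hP, hPS, hi⟩)

end blockHull

section brickWall

variable {n : ℕ} {S : Finset (Fin n)} {A U : Matrix (Fin n → Fin 2) (Fin n → Fin 2) ℂ}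

theorem supportedOn_star_mul_mul_gates
    (gates : List (Matrix (Fin n → Fin 2) (Fin n → Fin 2) ℂ × Finset (Fin n)))
    (hu : ∀ p ∈ gates, p.1 ∈ Matrix.unitaryGroup (Fin n → Fin 2) ℂ)
    (hs : ∀ p ∈ gates, supportedOn p.2 p.1) (hd : (gates.map Prod.snd).Pairwise Disjoint)
    (hA : supportedOn S A) :
    supportedOn (blockHull S (gates.map Prod.snd))
      (star (gates.map Prod.fst).prod * A * (gates.map Prod.fst).prod) := by
  refine supportedOn_star_prod_mul_mul_prod ?_ (hA.mono Finset.subset_union_left)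
  simp only [List.mem_map]
  rintro _ ⟨p, hp, rfl⟩ B hB
  rcases subset_blockHull_or_disjoint hd (List.mem_map_of_mem hp) with hsub | hdisj
  · exact ((hs p hp).mono hsub).star_mul_mul hB
  · rwa [star_mul_mul_eq_self_of_disjoint (hu p hp) (hs p hp) hB hdisj.symm]

theorem IsBrickWallLayer.supportedOn_star_mul_mul
    (hU : IsBrickWallLayer U) {a b : ℤ}
    (hA : supportedOn (Finset.univ.filter fun i : Fin n => a ≤ (i : ℤ) ∧ (i : ℤ) ≤ b) A) :
    supportedOn (Finset.univ.filter fun i : Fin n => a - 1 ≤ (i : ℤ) ∧ (i : ℤ) ≤ b + 1)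
      (star U * A * U) := by
  obtain ⟨gates, rfl, hu, hgates, hd⟩ := hU
  refine (supportedOn_star_mul_mul_gates gates hu
    (fun p hp => (hgates p hp).choose_spec.choose_spec.2) hd hA).mono fun i hi => ?_
  rcases mem_blockHull.mp hi with hiS | ⟨P, hP, hPS, hiP⟩
  · simp only [Finset.mem_filter, Finset.mem_univ, true_and] at hiS ⊢
    omega
  · obtain ⟨p, hp, rfl⟩ := List.mem_map.mp hP
    obtain ⟨m, hm, hpm, -⟩ := hgates p hp
    obtain ⟨j, hjP, hjS⟩ := Finset.not_disjoint_iff.mp hPS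
    rw [hpm] at hjP hiP
    simp only [Finset.mem_insert, Finset.mem_singleton, Fin.ext_iff, Finset.mem_filter,
      Finset.mem_univ, true_and] at hjP hiP hjS ⊢
    omega

end brickWall

theorem brickwall_conjugation_light_cone_general (n : ℕ) (l : ℕ)
    (Us : List (Matrix (Fin n → Fin 2) (Fin n → Fin 2) ℂ))
    (hlen : Us.length = l) (hlayers : ∀ V ∈ Us, IsBrickWallLayer V)
    (a b : ℤ)
    (A : Matrix (Fin n → Fin 2) (Fin n → Fin 2) ℂ)
    (hA : supportedOn (Finset.univ.filter fun i : Fin n => a ≤ (i : ℤ) ∧ (i : ℤ) ≤ b) A) :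
    supportedOn
      (Finset.univ.filter fun i : Fin n => a - l ≤ (i : ℤ) ∧ (i : ℤ) ≤ b + l)
      (star Us.prod * A * Us.prod) := by
  subst hlen
  induction Us generalizing a b A with
  | nil => simpa using hA
  | cons V Us ih =>
    have hVA := (hlayers V List.mem_cons_self).supportedOn_star_mul_mul hA
    have hrest := ih (fun W hW => hlayers W (List.mem_cons_of_mem V hW)) (a - 1) (b + 1) _ hVA
    have hconj : star (V * Us.prod) * A * (V * Us.prod) =
        star Us.prod * (star V * A * V) * Us.prod := by
      simp only [star_mul, mul_assoc]
    rw [List.prod_cons, hconj]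
    convert hrest using 3 <;> simp only [List.length_cons, Nat.cast_succ] <;> omega

/-- Light-cone growth of supports: conjugating an operator supported on an
interval `[a, b]` by a product `U = U_l ⋯ U_1` of `l` brick-wall layers yields an
operator supported on the interval `[a - l, b + l]`. -/
theorem brickwall_conjugation_light_cone (n : ℕ) (hn : 1 ≤ n) (l : ℕ)
    (Us : List (Matrix (Fin n → Fin 2) (Fin n → Fin 2) ℂ))
    (hlen : Us.length = l) (hlayers : ∀ V ∈ Us, IsBrickWallLayer V)
    (a b : ℤ) (hab : a ≤ b)
    (A : Matrix (Fin n → Fin 2) (Fin n → Fin 2) ℂ)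
    (hA : supportedOn (Finset.univ.filter fun i : Fin n => a ≤ (i : ℤ) ∧ (i : ℤ) ≤ b) A) :
    supportedOn
      (Finset.univ.filter fun i : Fin n => a - l ≤ (i : ℤ) ∧ (i : ℤ) ≤ b + l)
      (star Us.prod * A * Us.prod) :=
  brickwall_conjugation_light_cone_general n l Us hlen hlayers a b A hA
end

section
/- Let n ≥ 2, J, g ∈ ℝ, and let H be the 2^n × 2^n transverse-field Ising Hamiltonian H = −J ( Σ_{i=0}^{n-2} Z_i Z_{i+1} + g Σ_{i=0}^{n-1} X_i ), where X_i, Z_i are the Pauli-string matrices acting as Pauli X (respectively Z) on site i and identity elsewhere. Let l ≥ 0 and let U = U_l ⋯ U_1 be a product of l brick-wall layers on n qubits. Then the number of Pauli strings P : Fin n → Fin 4 with Tr(σ^P · U* H U) ≠ 0 is at most n · 4^{2+2l}. -/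
open Matrix

/-- Pauli `X` acting on site `i` and identity elsewhere. -/
noncomputable def pauliX (n : ℕ) (i : Fin n) : Matrix (Fin n → Fin 2) (Fin n → Fin 2) ℂ :=
  pauliString n (Function.update (fun _ => 0) i 1)

/-- Pauli `Z` acting on site `i` and identity elsewhere. -/
noncomputable def pauliZ (n : ℕ) (i : Fin n) : Matrix (Fin n → Fin 2) (Fin n → Fin 2) ℂ :=
  pauliString n (Function.update (fun _ => 0) i 3)

/-- The transverse-field Ising Hamiltonian
`H = −J (Σ_{i=0}^{n-2} Z_i Z_{i+1} + g Σ_{i=0}^{n-1} X_i)` on `n` qubits. -/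
noncomputable def isingHamiltonian (n : ℕ) (J g : ℝ) :
    Matrix (Fin n → Fin 2) (Fin n → Fin 2) ℂ :=
  (-(J : ℂ)) •
    ((∑ i : Fin n, if h : (i : ℕ) + 1 < n then
        pauliZ n i * pauliZ n ⟨(i : ℕ) + 1, h⟩ else 0) +
      (g : ℂ) • ∑ i : Fin n, pauliX n i)

/-!
A matrix acting only on the qubits in `S` has zero trace against every Pauli string that is
nontrivial at some site `j ∉ S`: flipping qubit `j` in both indices leaves the matrix unchanged
but negates the diagonal of `σ_{P j}`. The Ising Hamiltonian is a sum of `n` terms, the `i`-th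
acting on the bond `{i, i + 1}`. Conjugating by a brick-wall layer widens such a support by at
most one site on each side, because a gate disjoint from the support commutes with the term
and cancels against its adjoint. After `l` layers every term acts on at most `2 + 2 l` sites,
so it meets at most `4 ^ (2 + 2 l)` Pauli strings.
-/

section

variable {n : ℕ}

/-- The operators acting only on the qubits in `S`: an entry vanishes unless its two indices
agree off `S`, and is unchanged when the same qubits off `S` are flipped in both indices. This
is the entrywise form of `supportedOn S`, in which closure under the algebra operations is
evident. -/
def localAlgebra (S : Finset (Fin n)) :
    StarSubalgebra ℂ (Matrix (Fin n → Fin 2) (Fin n → Fin 2) ℂ) where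
  carrier := {A | (∀ x y i, i ∉ S → x i ≠ y i → A x y = 0) ∧
    ∀ c : Fin n → Fin 2, (∀ i ∈ S, c i = 0) → ∀ x y, A (x + c) (y + c) = A x y}
  mul_mem' := by
    rintro A B ⟨hA₀, hA⟩ ⟨hB₀, hB⟩
    refine ⟨fun x y i hi hxy => ?_, fun c hc x y => ?_⟩
    · rw [mul_apply]
      refine Finset.sum_eq_zero fun z _ => ?_
      by_cases hz : x i = z i
      · rw [hB₀ z y i hi (hz ▸ hxy), mul_zero]
      · rw [hA₀ x z i hi hz, zero_mul]
    · simp only [mul_apply]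
      exact (Fintype.sum_equiv (Equiv.addRight c) _ _ fun z => by simp [hA c hc, hB c hc]).symm
  add_mem' := by
    rintro A B ⟨hA₀, hA⟩ ⟨hB₀, hB⟩
    exact ⟨fun x y i hi hxy => by simp [hA₀ x y i hi hxy, hB₀ x y i hi hxy],
      fun c hc x y => by simp [hA c hc, hB c hc]⟩
  algebraMap_mem' r := by
    refine ⟨fun x y i _ hxy => ?_, fun c _ x y => ?_⟩
    · simpa [algebraMap_eq_diagonal, diagonal_apply] using
        fun h : x = y => absurd (congrFun h i) hxy
    · simp [algebraMap_eq_diagonal, diagonal_apply]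
  star_mem' := by
    rintro A ⟨hA₀, hA⟩
    refine ⟨fun x y i hi hxy => ?_, fun c hc x y => ?_⟩
    · simp [hA₀ y x i hi (Ne.symm hxy)]
    · simp [hA c hc]

lemma localAlgebra_mono {S T : Finset (Fin n)} (h : S ⊆ T) :
    localAlgebra S ≤ localAlgebra T :=
  fun _ ⟨hA₀, hA⟩ => ⟨fun x y i hi => hA₀ x y i (fun hS => hi (h hS)),
    fun c hc => hA c fun i hi => hc i (h hi)⟩

lemma mem_localAlgebra_of_supportedOn {S : Finset (Fin n)}
    {G : Matrix (Fin n → Fin 2) (Fin n → Fin 2) ℂ} (h : supportedOn S G) :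
    G ∈ localAlgebra S := by
  obtain ⟨B, rfl⟩ := h
  refine ⟨fun x y i hi hxy => ?_, fun c hc x y => ?_⟩ <;>
    simp only [of_apply, kroneckerMap_apply, Equiv.piEquivPiSubtypeProd_apply, one_apply]
  · rw [if_neg fun h => hxy (congrFun h ⟨i, hi⟩), mul_zero]
  · have hS : ∀ z : Fin n → Fin 2, (fun j : S => (z + c) j.1) = fun j : S => z j.1 :=
      fun z => funext fun j => by simp [hc j j.2]
    have hSc : ((fun j : {i // i ∉ S} => (x + c) j.1) = fun j : {i // i ∉ S} => (y + c) j.1) ↔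
        (fun j : {i // i ∉ S} => x j.1) = fun j : {i // i ∉ S} => y j.1 := by
      simp [funext_iff]
    simp only [hS, hSc]

lemma pauliString_mem_localAlgebra {S : Finset (Fin n)} {P : Fin n → Fin 4}
    (hP : ∀ i ∉ S, P i = 0) : pauliString n P ∈ localAlgebra S := by
  refine ⟨fun x y i hi hxy => ?_, fun c hc x y => ?_⟩ <;> simp only [pauliString, of_apply]
  · exact Finset.prod_eq_zero (Finset.mem_univ i) (by simp [hP i hi, pauli, one_apply, hxy])
  · refine Finset.prod_congr rfl fun i _ => ?_
    by_cases hi : i ∈ S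
    · simp [hc i hi]
    · simp [hP i hi, pauli, one_apply]

lemma pauliString_update_mem_localAlgebra {S : Finset (Fin n)} {i : Fin n} (hi : i ∈ S)
    (a : Fin 4) : pauliString n (Function.update (fun _ => 0) i a) ∈ localAlgebra S :=
  pauliString_mem_localAlgebra fun _ hj =>
    Function.update_of_ne (ne_of_mem_of_not_mem hi hj).symm _ _

lemma mul_apply_eq_of_disjoint {S T : Finset (Fin n)}
    {A B : Matrix (Fin n → Fin 2) (Fin n → Fin 2) ℂ} (hA : A ∈ localAlgebra S)
    (hB : B ∈ localAlgebra T) (hST : Disjoint S T) (x y : Fin n → Fin 2) :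
    (A * B) x y = A x (S.piecewise y x) * B (S.piecewise y x) y := by
  rw [mul_apply]
  refine Finset.sum_eq_single _ (fun z _ hz => ?_) (by simp)
  obtain ⟨i, hi⟩ := Function.ne_iff.mp hz
  by_cases hiS : i ∈ S
  · rw [hB.1 z y i (Finset.disjoint_left.mp hST hiS) (by simpa [hiS] using hi), mul_zero]
  · rw [hA.1 x z i hiS (by simpa [hiS, eq_comm] using hi), zero_mul]

lemma commute_of_disjoint {S T : Finset (Fin n)}
    {A B : Matrix (Fin n → Fin 2) (Fin n → Fin 2) ℂ} (hA : A ∈ localAlgebra S)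
    (hB : B ∈ localAlgebra T) (hST : Disjoint S T) : Commute A B := by
  ext x y
  rw [mul_apply_eq_of_disjoint hA hB hST, mul_apply_eq_of_disjoint hB hA hST.symm]
  by_cases hxy : ∀ i ∉ S ∪ T, x i = y i
  · have hA' : A x (S.piecewise y x) = A (T.piecewise y x) y := by
      have := hA.2 (x - T.piecewise y x) (fun i hi => by simp [Finset.disjoint_left.mp hST hi])
        (T.piecewise y x) y
      rw [add_sub_cancel] at this
      rw [← this]
      congr 1
      funext i
      by_cases hS : i ∈ S
      · simp [hS, Finset.disjoint_left.mp hST hS]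
      · by_cases hT : i ∈ T <;> simp [hS, hT, hxy i]
    have hB' : B (S.piecewise y x) y = B x (T.piecewise y x) := by
      have := hB.2 (S.piecewise y x - x) (fun i hi => by simp [Finset.disjoint_right.mp hST hi])
        x (T.piecewise y x)
      rw [add_sub_cancel] at this
      rw [← this]
      congr 1
      funext i
      by_cases hS : i ∈ S
      · simp [hS, Finset.disjoint_left.mp hST hS]
      · by_cases hT : i ∈ T <;> simp [hS, hT, hxy i]
    rw [hA', hB', mul_comm]
  · push Not at hxy
    obtain ⟨i, hi, hne⟩ := hxy
    rw [Finset.mem_union, not_or] at hi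
    rw [hB.1 _ y i hi.2 (by simpa [hi.1] using hne), hA.1 _ y i hi.1 (by simpa [hi.2] using hne),
      mul_zero, mul_zero]

lemma pauli_apply_add_one_add_one {a : Fin 4} (ha : a ≠ 0) (b : Fin 2) :
    pauli a (b + 1) (b + 1) = -pauli a b b := by
  fin_cases a <;> fin_cases b <;> simp_all [pauli]

lemma pauliString_apply_add_single {P : Fin n → Fin 4} {j : Fin n} (hP : P j ≠ 0)
    {x y : Fin n → Fin 2} (hxy : x j = y j) :
    pauliString n P (x + Pi.single j 1) (y + Pi.single j 1) = -pauliString n P x y := by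
  simp only [pauliString, of_apply]
  rw [← Finset.mul_prod_erase _ _ (Finset.mem_univ j),
    ← Finset.mul_prod_erase _ _ (Finset.mem_univ j)]
  rw [Finset.prod_congr rfl fun i hi => by
    rw [Pi.add_apply, Pi.add_apply, Pi.single_eq_of_ne (Finset.ne_of_mem_erase hi), add_zero,
      add_zero]]
  simp [hxy, pauli_apply_add_one_add_one hP]

lemma trace_pauliString_mul_eq_zero {S : Finset (Fin n)}
    {M : Matrix (Fin n → Fin 2) (Fin n → Fin 2) ℂ} (hM : M ∈ localAlgebra S)
    {P : Fin n → Fin 4} {j : Fin n} (hj : j ∉ S) (hP : P j ≠ 0) :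
    (pauliString n P * M).trace = 0 := by
  set c : Fin n → Fin 2 := Pi.single j 1
  have hc : ∀ i ∈ S, c i = 0 := fun i hi => Pi.single_eq_of_ne (ne_of_mem_of_not_mem hi hj) _
  have hflip : ∀ x y, pauliString n P (x + c) (y + c) * M (y + c) (x + c) =
      -(pauliString n P x y * M y x) := by
    intro x y
    by_cases hxy : x j = y j
    · rw [pauliString_apply_add_single hP hxy, hM.2 c hc, neg_mul]
    · rw [hM.1 y x j hj (Ne.symm hxy), hM.1 _ _ j hj (by simpa [c] using Ne.symm hxy),
        mul_zero, mul_zero, neg_zero]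
  have htrace : (pauliString n P * M).trace = -(pauliString n P * M).trace := by
    simp only [trace, diag, mul_apply, ← Finset.sum_neg_distrib]
    refine Fintype.sum_equiv (Equiv.addRight c) _ _ fun x => ?_
    exact Fintype.sum_equiv (Equiv.addRight c) _ _ fun y => by simp [hflip]
  exact self_eq_neg.mp htrace

/-- Gates meeting the support `S` of `A` must lie in `K`, where they are absorbed into the
support; the others commute with `A` and cancel. -/
lemma conj_mem_localAlgebra_of_gates {S K : Finset (Fin n)}
    (gates : List (Matrix (Fin n → Fin 2) (Fin n → Fin 2) ℂ × Finset (Fin n)))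
    (hunitary : ∀ p ∈ gates, p.1 ∈ unitaryGroup (Fin n → Fin 2) ℂ)
    (hlocal : ∀ p ∈ gates, p.1 ∈ localAlgebra p.2)
    (hdisj : (gates.map Prod.snd).Pairwise Disjoint)
    (hK : ∀ p ∈ gates, p.2 ⊆ K ∨ Disjoint p.2 S) (hSK : S ⊆ K)
    {A : Matrix (Fin n → Fin 2) (Fin n → Fin 2) ℂ} (hA : A ∈ localAlgebra S) :
    star (gates.map Prod.fst).prod * A * (gates.map Prod.fst).prod ∈ localAlgebra K := by
  induction gates generalizing S A with
  | nil => simpa using localAlgebra_mono hSK hA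
  | cons p gates ih =>
    obtain ⟨G, T⟩ := p
    rw [List.map_cons, List.pairwise_cons] at hdisj
    have hG : G ∈ localAlgebra T := hlocal _ List.mem_cons_self
    have hunitary' := fun q hq => hunitary q (List.mem_cons_of_mem _ hq)
    have hlocal' := fun q hq => hlocal q (List.mem_cons_of_mem _ hq)
    suffices star (gates.map Prod.fst).prod * (star G * A * G) * (gates.map Prod.fst).prod ∈
        localAlgebra K by simpa [star_mul, mul_assoc] using this
    rcases hK _ List.mem_cons_self with hTK | hTS
    · refine ih hunitary' hlocal' hdisj.2 (fun q hq => ?_) (Finset.union_subset hSK hTK)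
        (S := S ∪ T) ?_
      · refine (hK q (List.mem_cons_of_mem _ hq)).imp_right fun hqS => ?_
        exact Finset.disjoint_union_right.mpr
          ⟨hqS, (hdisj.1 q.2 (List.mem_map_of_mem hq)).symm⟩
      · have hG' := localAlgebra_mono (Finset.subset_union_right (s₁ := S)) hG
        exact mul_mem (mul_mem (star_mem hG') (localAlgebra_mono Finset.subset_union_left hA)) hG'
    · have hcancel : star G * A * G = A := by
        rw [mul_assoc, (commute_of_disjoint hA hG hTS.symm).eq, ← mul_assoc,
          Unitary.star_mul_self_of_mem (hunitary _ List.mem_cons_self), one_mul]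
      rw [hcancel]
      exact ih hunitary' hlocal' hdisj.2 (fun q hq => hK q (List.mem_cons_of_mem _ hq)) hSK hA

/-- The sites `i - k, …, i + 1 + k`: the light cone of the bond `{i, i + 1}` after `k`
brick-wall layers. -/
def window (i : Fin n) (k : ℕ) : Finset (Fin n) :=
  Finset.univ.filter fun j => (i : ℕ) ≤ j + k ∧ (j : ℕ) ≤ i + 1 + k

lemma mem_window {i j : Fin n} {k : ℕ} :
    j ∈ window i k ↔ (i : ℕ) ≤ j + k ∧ (j : ℕ) ≤ i + 1 + k := by
  simp [window]

lemma card_window_le (i : Fin n) (k : ℕ) : (window i k).card ≤ 2 + 2 * k := by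
  have h : (window i k).card ≤ (Finset.Icc ((i : ℕ) - k) (i + 1 + k)).card := by
    refine Finset.card_le_card_of_injOn Fin.val (fun j hj => ?_) Fin.val_injective.injOn
    rw [Finset.mem_coe, mem_window] at hj
    simp only [Finset.coe_Icc, Set.mem_Icc]
    omega
  rw [Nat.card_Icc] at h
  omega

lemma conj_mem_localAlgebra_window {U A : Matrix (Fin n → Fin 2) (Fin n → Fin 2) ℂ}
    (hU : IsBrickWallLayer U) {i : Fin n} {k : ℕ} (hA : A ∈ localAlgebra (window i k)) :
    star U * A * U ∈ localAlgebra (window i (k + 1)) := by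
  obtain ⟨gates, rfl, hunitary, hadj, hdisj⟩ := hU
  refine conj_mem_localAlgebra_of_gates gates hunitary
    (fun p hp => mem_localAlgebra_of_supportedOn (hadj p hp).choose_spec.choose_spec.2) hdisj
    (fun p hp => ?_) (fun j hj => by rw [mem_window] at hj ⊢; omega) hA
  obtain ⟨m, hm, hp, -⟩ := hadj p hp
  rw [hp]
  by_cases h : (i : ℕ) ≤ m + 1 + k ∧ m ≤ i + 1 + k
  · left
    intro j hj
    rw [mem_window]
    simp only [Finset.mem_insert, Finset.mem_singleton] at hj
    rcases hj with rfl | rfl <;> simp only <;> omega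
  · right
    rw [Finset.disjoint_left]
    intro j hj
    rw [mem_window]
    simp only [Finset.mem_insert, Finset.mem_singleton] at hj
    rcases hj with rfl | rfl <;> simp only <;> omega

lemma conj_prod_mem_localAlgebra_window
    (Us : List (Matrix (Fin n → Fin 2) (Fin n → Fin 2) ℂ)) (hUs : ∀ V ∈ Us, IsBrickWallLayer V)
    {i : Fin n} {k : ℕ} {A : Matrix (Fin n → Fin 2) (Fin n → Fin 2) ℂ} (hA : A ∈ localAlgebra (window i k)) :
    star Us.prod * A * Us.prod ∈ localAlgebra (window i (k + Us.length)) := by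
  induction Us generalizing k A with
  | nil => simpa using hA
  | cons V Us ih =>
    have := ih (fun W hW => hUs W (List.mem_cons_of_mem _ hW))
      (conj_mem_localAlgebra_window (hUs V List.mem_cons_self) hA)
    rw [List.prod_cons, star_mul, List.length_cons, ← add_assoc, add_right_comm]
    simpa only [mul_assoc] using this

noncomputable def isingTerm (n : ℕ) (J g : ℝ) (i : Fin n) :
    Matrix (Fin n → Fin 2) (Fin n → Fin 2) ℂ :=
  (-(J : ℂ)) •
    ((if h : (i : ℕ) + 1 < n then pauliZ n i * pauliZ n ⟨(i : ℕ) + 1, h⟩ else 0) +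
      (g : ℂ) • pauliX n i)

lemma isingHamiltonian_eq_sum (n : ℕ) (J g : ℝ) :
    isingHamiltonian n J g = ∑ i, isingTerm n J g i := by
  simp [isingHamiltonian, isingTerm, Finset.smul_sum, Finset.sum_add_distrib]

lemma isingTerm_mem_localAlgebra (J g : ℝ) (i : Fin n) :
    isingTerm n J g i ∈ localAlgebra (window i 0) := by
  have hi : i ∈ window i 0 := mem_window.mpr (by omega)
  refine StarSubalgebra.smul_mem _ (add_mem ?_
    (StarSubalgebra.smul_mem _ (pauliString_update_mem_localAlgebra hi 1) _)) _
  split_ifs with h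
  · exact mul_mem (pauliString_update_mem_localAlgebra hi 3)
      (pauliString_update_mem_localAlgebra (mem_window.mpr (by simp)) 3)
  · exact zero_mem _

def pauliStringsOn (S : Finset (Fin n)) : Finset (Fin n → Fin 4) :=
  Fintype.piFinset fun j => if j ∈ S then Finset.univ else {0}

lemma mem_pauliStringsOn {S : Finset (Fin n)} {P : Fin n → Fin 4} :
    P ∈ pauliStringsOn S ↔ ∀ j ∉ S, P j = 0 := by
  simp only [pauliStringsOn, Fintype.mem_piFinset]
  refine forall_congr' fun j => ?_
  by_cases hj : j ∈ S <;> simp [hj]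

lemma card_pauliStringsOn (S : Finset (Fin n)) : (pauliStringsOn S).card = 4 ^ S.card := by
  simp [pauliStringsOn, apply_ite Finset.card, Finset.prod_ite_mem]

lemma card_pauliString_trace_ne_zero_le {ι : Type*} [Fintype ι]
    (M : ι → Matrix (Fin n → Fin 2) (Fin n → Fin 2) ℂ) (S : ι → Finset (Fin n))
    {k : ℕ} (hM : ∀ i, M i ∈ localAlgebra (S i)) (hS : ∀ i, (S i).card ≤ k) :
    Nat.card {P : Fin n → Fin 4 // (pauliString n P * ∑ i, M i).trace ≠ 0} ≤
      Fintype.card ι * 4 ^ k := by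
  classical
  have hsub : Finset.univ.filter (fun P => (pauliString n P * ∑ i, M i).trace ≠ 0) ⊆
      Finset.univ.biUnion fun i => pauliStringsOn (S i) := by
    intro P hP
    simp only [Finset.mem_filter, Finset.mem_univ, true_and, Finset.mul_sum, trace_sum] at hP
    obtain ⟨i, -, hi⟩ := Finset.exists_ne_zero_of_sum_ne_zero hP
    refine Finset.mem_biUnion.mpr ⟨i, Finset.mem_univ _, mem_pauliStringsOn.mpr fun j hj => ?_⟩
    by_contra hPj
    exact hi (trace_pauliString_mul_eq_zero (hM i) hj hPj)
  calc Nat.card {P : Fin n → Fin 4 // (pauliString n P * ∑ i, M i).trace ≠ 0}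
      = (Finset.univ.filter fun P => (pauliString n P * ∑ i, M i).trace ≠ 0).card := by
        rw [Nat.card_eq_fintype_card, Fintype.card_subtype]
    _ ≤ ∑ i, (pauliStringsOn (S i)).card :=
        (Finset.card_le_card hsub).trans Finset.card_biUnion_le
    _ ≤ ∑ _i : ι, 4 ^ k := Finset.sum_le_sum fun i _ => by
        rw [card_pauliStringsOn]; exact Nat.pow_le_pow_right (by norm_num) (hS i)
    _ = Fintype.card ι * 4 ^ k := by simp

end

theorem ising_brickwall_pauli_count_general (n : ℕ) (J g : ℝ) (l : ℕ)
    (Us : List (Matrix (Fin n → Fin 2) (Fin n → Fin 2) ℂ))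
    (hlen : Us.length = l) (hlayers : ∀ V ∈ Us, IsBrickWallLayer V) :
    Nat.card {P : Fin n → Fin 4 //
        (pauliString n P * (star Us.prod * isingHamiltonian n J g * Us.prod)).trace ≠ 0}
      ≤ n * 4 ^ (2 + 2 * l) := by
  have hterms : ∀ i, star Us.prod * isingTerm n J g i * Us.prod ∈ localAlgebra (window i l) :=
    fun i => by
      simpa [hlen] using
        conj_prod_mem_localAlgebra_window Us hlayers (isingTerm_mem_localAlgebra J g i)
  have hconj : star Us.prod * isingHamiltonian n J g * Us.prod =
      ∑ i, star Us.prod * isingTerm n J g i * Us.prod := by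
    rw [isingHamiltonian_eq_sum, Finset.mul_sum, Finset.sum_mul]
  simpa [hconj] using card_pauliString_trace_ne_zero_le _ _ hterms fun i => card_window_le i l

/-- Conjugating the transverse-field Ising Hamiltonian by a product of `l`
brick-wall layers produces an operator containing at most `n · 4^{2+2l}` Pauli strings. -/
theorem ising_brickwall_pauli_count (n : ℕ) (hn : 2 ≤ n) (J g : ℝ) (l : ℕ)
    (Us : List (Matrix (Fin n → Fin 2) (Fin n → Fin 2) ℂ))
    (hlen : Us.length = l) (hlayers : ∀ V ∈ Us, IsBrickWallLayer V) :
    Nat.card {P : Fin n → Fin 4 //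
        (pauliString n P * (star Us.prod * isingHamiltonian n J g * Us.prod)).trace ≠ 0}
      ≤ n * 4 ^ (2 + 2 * l) :=
  ising_brickwall_pauli_count_general n J g l Us hlen hlayers
end
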